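/- arXiv:2404.07854 — 13 statements merged into one kernel-verified Lean document; each statement's English description precedes it below -/
import Mathlib

section
/- Let 𝒜 be a reflexive graph. Every fan of 𝒜 is a subsingleton if and only if every co-fan of 𝒜 is a subsingleton. -/
/-- A reflexive graph: a type of vertices, a family of edge types, and
reflexivity data. -/
structure RxGraph where
  V : Type*
  Edge : V → V → Type*
  rx : ∀ x, Edge x x

/-- The fan of a vertex `x`: vertices equipped with an edge from `x`. -/
def RxGraph.Fan (A : RxGraph) (x : A.V) : Type _ :=
  Σ y, A.Edge x y

/-- The co-fan of a vertex `x`: vertices equipped with an edge toward `x`. -/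
def RxGraph.CoFan (A : RxGraph) (x : A.V) : Type _ :=
  Σ y, A.Edge y x

/-- A reflexive graph is univalent (a path object) when every fan is a
subsingleton. -/
def RxGraph.Univalent (A : RxGraph) : Prop :=
  ∀ x, Subsingleton (A.Fan x)

lemma fan_aux (A : RxGraph) (h : ∀ x, Subsingleton (A.Fan x)) (x : A.V)
    (c : A.CoFan x) : c = ⟨x, A.rx x⟩ := by
  obtain ⟨y, e⟩ := c
  have := (h y).elim (⟨x, e⟩ : A.Fan y) ⟨y, A.rx y⟩
  injection this with h1 h2
  subst h1
  simp_all [RxGraph.CoFan]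

lemma cofan_aux (A : RxGraph) (h : ∀ x, Subsingleton (A.CoFan x)) (x : A.V)
    (c : A.Fan x) : c = ⟨x, A.rx x⟩ := by
  obtain ⟨y, e⟩ := c
  have := (h y).elim (⟨x, e⟩ : A.CoFan y) ⟨y, A.rx y⟩
  injection this with h1 h2
  subst h1
  simp_all [RxGraph.Fan]

/-- Every fan of a reflexive graph is a subsingleton if and only if every
co-fan is a subsingleton. -/
theorem fan_subsingleton_iff_cofan_subsingleton (A : RxGraph) :
    (∀ x, Subsingleton (A.Fan x)) ↔ (∀ x, Subsingleton (A.CoFan x)) := by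
  constructor
  · intro h x
    exact ⟨fun a b => (fan_aux A h x a).trans (fan_aux A h x b).symm⟩
  · intro h x
    exact ⟨fun a b => (cofan_aux A h x a).trans (cofan_aux A h x b).symm⟩
end

section
/- A reflexive graph 𝒜 is univalent if and only if its opposite 𝒜ᵒᵖ is univalent. -/
/-- The opposite reflexive graph: same vertices, edges reversed, same
reflexivity data. -/
def RxGraph.op (A : RxGraph) : RxGraph where
  V := A.V
  Edge := fun x y => A.Edge y x
  rx := A.rx

/-! In a univalent graph every edge `e : x ≈ y` is, as an element of the fan of `x`, the
reflexivity datum `⟨x, rx x⟩`; hence `x = y` and `e = rx x`. Read at the source `y` of an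
edge `e : y ≈ x`, this says that every element of the co-fan of `x` is also `⟨x, rx x⟩`, so
co-fans, which are the fans of the opposite graph, are subsingletons. Since `𝒜ᵒᵖᵒᵖ` is `𝒜`
on the nose, the converse is the same statement for `𝒜ᵒᵖ`. -/

namespace RxGraph

variable {A : RxGraph}

theorem Univalent.fan_eq_rx (h : A.Univalent) {x : A.V} (p : A.Fan x) :
    p = ⟨x, A.rx x⟩ :=
  (h x).elim _ _

theorem Univalent.coFan_eq_rx (h : A.Univalent) {x : A.V} : ∀ q : A.CoFan x, q = ⟨x, A.rx x⟩
  | ⟨y, e⟩ => by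
    obtain ⟨rfl, he⟩ := Sigma.mk.inj_iff.mp (h.fan_eq_rx (⟨x, e⟩ : A.Fan y))
    rw [eq_of_heq he]

theorem Univalent.subsingleton_coFan (h : A.Univalent) (x : A.V) : Subsingleton (A.CoFan x) :=
  ⟨fun p q => (h.coFan_eq_rx p).trans (h.coFan_eq_rx q).symm⟩

theorem Univalent.op (h : A.Univalent) : A.op.Univalent :=
  h.subsingleton_coFan

end RxGraph

/-- A reflexive graph is univalent iff its opposite is univalent. -/
theorem univalent_iff_op_univalent (A : RxGraph) :
    A.Univalent ↔ A.op.Univalent :=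
  ⟨RxGraph.Univalent.op, RxGraph.Univalent.op⟩
end

section
/- If 𝒜 is a path object and ℬ is a displayed path object over 𝒜, then the total reflexive graph 𝒜.ℬ is a path object. -/
/-- A displayed reflexive graph over a reflexive graph `A`. -/
structure DispRxGraph (A : RxGraph) where
  V : A.V → Type*
  Edge : ∀ {x y : A.V}, A.Edge x y → V x → V y → Type*
  drx : ∀ (x : A.V) (u : V x), Edge (A.rx x) u u

/-- The component of a displayed reflexive graph at a vertex. -/
def DispRxGraph.component {A : RxGraph} (B : DispRxGraph A) (x : A.V) :
    RxGraph where
  V := B.V x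
  Edge := fun u v => B.Edge (A.rx x) u v
  rx := fun u => B.drx x u

/-- A displayed reflexive graph is univalent (a displayed path object) when
each of its components is univalent. -/
def DispRxGraph.Univalent {A : RxGraph} (B : DispRxGraph A) : Prop :=
  ∀ x, (B.component x).Univalent

/-- The total reflexive graph of a displayed reflexive graph. -/
def RxGraph.total (A : RxGraph) (B : DispRxGraph A) : RxGraph where
  V := Σ x, B.V x
  Edge := fun xu yv => Σ p : A.Edge xu.1 yv.1, B.Edge p xu.2 yv.2
  rx := fun xu => ⟨A.rx xu.1, B.drx xu.1 xu.2⟩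

/-- If `A` is a path object and `B` is a displayed path object over `A`, then
the total reflexive graph `A.B` is a path object. -/
theorem total_univalent (A : RxGraph) (B : DispRxGraph A)
    (hA : A.Univalent) (hB : B.Univalent) : (A.total B).Univalent := by
  rintro ⟨x, u⟩
  constructor
  suffices h : ∀ f : (A.total B).Fan ⟨x, u⟩,
      f = ⟨⟨x, u⟩, A.rx x, B.drx x u⟩ by
    intro a b; rw [h a, h b]
  rintro ⟨⟨y, v⟩, p, q⟩
  have h1 : (⟨y, p⟩ : A.Fan x) = ⟨x, A.rx x⟩ := (hA x).elim _ _
  obtain ⟨rfl, hp⟩ := Sigma.mk.inj_iff.mp h1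
  cases hp
  have h2 : (⟨v, q⟩ : (B.component y).Fan u) = ⟨u, B.drx y u⟩ := (hB y u).elim _ _
  obtain ⟨rfl, hq⟩ := Sigma.mk.inj_iff.mp h2
  cases hq
  rfl
end

section
/- If 𝒜 and ℬ are path objects, then the binary product reflexive graph 𝒜 × ℬ is a path object. -/
/-- The binary product of reflexive graphs. -/
def RxGraph.prod (A B : RxGraph) : RxGraph where
  V := A.V × B.V
  Edge := fun u v => A.Edge u.1 v.1 × B.Edge u.2 v.2
  rx := fun u => ⟨A.rx u.1, B.rx u.2⟩

/-- If `A` and `B` are path objects then so is their binary product. -/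
theorem prod_univalent (A B : RxGraph) (hA : A.Univalent) (hB : B.Univalent) :
    (A.prod B).Univalent := by
  intro x
  constructor
  rintro ⟨⟨a₁, b₁⟩, ea₁, eb₁⟩ ⟨⟨a₂, b₂⟩, ea₂, eb₂⟩
  have ha := (hA x.1).allEq ⟨a₁, ea₁⟩ ⟨a₂, ea₂⟩
  have hb := (hB x.2).allEq ⟨b₁, eb₁⟩ ⟨b₂, eb₂⟩
  obtain ⟨rfl, ha'⟩ : a₁ = a₂ ∧ HEq ea₁ ea₂ := by
    cases ha; exact ⟨rfl, HEq.rfl⟩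
  obtain ⟨rfl, hb'⟩ : b₁ = b₂ ∧ HEq eb₁ eb₂ := by
    cases hb; exact ⟨rfl, HEq.rfl⟩
  cases eq_of_heq ha'
  cases eq_of_heq hb'
  rfl
end

section
/- Let A be a type and let ℬ(x) be a path object for each x : A. Assuming dependent function extensionality, the product reflexive graph ∏ x:A, ℬ(x) is a path object. -/
/-- The product of a family of reflexive graphs. -/
def RxGraph.pi (A : Type*) (B : A → RxGraph) : RxGraph where
  V := ∀ x, (B x).V
  Edge := fun f g => ∀ x, (B x).Edge (f x) (g x)
  rx := fun f x => (B x).rx (f x)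

/-- If `B x` is a path object for every `x : A`, then the product reflexive
graph `∏ x : A, B x` is a path object. (Dependent function extensionality is
available ambiently in Lean.) -/
theorem pi_univalent (A : Type*) (B : A → RxGraph)
    (hB : ∀ x, (B x).Univalent) : (RxGraph.pi A B).Univalent := by
  intro f
  have e : (RxGraph.pi A B).Fan f ≃ ∀ x, (B x).Fan (f x) :=
    { toFun := fun p x => ⟨p.1 x, p.2 x⟩
      invFun := fun p => ⟨fun x => (p x).1, fun x => (p x).2⟩
      left_inv := fun _ => rfl
      right_inv := fun _ => rfl }
  have : Subsingleton (∀ x, (B x).Fan (f x)) :=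
    @Pi.instSubsingleton _ _ (fun x => hB x (f x))
  exact e.subsingleton
end

section
/- Let A be a type and let ℬ(x) be a path object for each x : A. Then the coproduct reflexive graph ∐ x:A, ℬ(x) is a path object. -/
/-- The coproduct of a family of reflexive graphs, with edges given by an
identification in the index together with an edge from the transported
displayed vertex. -/
def RxGraph.coprod (A : Type*) (B : A → RxGraph) : RxGraph where
  V := Σ x, (B x).V
  Edge := fun u v =>
    Σ' p : u.1 = v.1,
      (B v.1).Edge (Eq.rec (motive := fun z _ => (B z).V) u.2 p) v.2
  rx := fun u => ⟨rfl, (B u.1).rx u.2⟩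

/-- If `B x` is a path object for every `x : A`, then the coproduct reflexive
graph `∐ x : A, B x` is a path object. -/
theorem coprod_univalent (A : Type*) (B : A → RxGraph)
    (hB : ∀ x, (B x).Univalent) : (RxGraph.coprod A B).Univalent := by
  rintro ⟨a, b⟩
  constructor
  rintro ⟨⟨a₁, b₁⟩, ⟨p, e⟩⟩ ⟨⟨a₂, b₂⟩, ⟨q, f⟩⟩
  dsimp at p q
  subst p; subst q
  dsimp [RxGraph.coprod] at e f
  have : (⟨b₁, e⟩ : (B a).Fan b) = ⟨b₂, f⟩ := (hB a b).elim _ _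
  cases this
  rfl
end

section
/- Let ℬ be a lax contravariant lens over a reflexive graph 𝒜. If each component ℬ(x) is univalent, then the display d⁻ℬ is a univalent displayed reflexive graph over 𝒜. -/
/-- A lax contravariant lens over a reflexive graph `A`: a family of reflexive
graphs indexed in vertices, equipped with pullback operations along edges
and a lax unitor. -/
structure CtrvLens (A : RxGraph) where
  B : A.V → RxGraph.{u_3, u_4}
  pull : ∀ {x y : A.V}, A.Edge x y → (B y).V → (B x).V
  pullRx : ∀ (x : A.V) (u : (B x).V), (B x).Edge u (pull (A.rx x) u)

/-- The display of a lax contravariant lens. -/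
def CtrvLens.disp {A : RxGraph} (L : CtrvLens A) : DispRxGraph A where
  V := fun x => (L.B x).V
  Edge := fun {x _} p u v => (L.B x).Edge u (L.pull p v)
  drx := fun x u => L.pullRx x u

/-! In a univalent `ℬ(x)` the unitor `u ≈ pull (rx x) u` forces `pull (rx x) u = u`, so the
fan of `u` in the component of `d⁻ℬ` at `x` is the fan of `u` in `ℬ(x)`, reindexed along an
injection. -/

theorem RxGraph.Univalent.eq_of_edge {A : RxGraph} (hA : A.Univalent) {x y : A.V}
    (e : A.Edge x y) : y = x :=
  congrArg Sigma.fst ((hA x).elim ⟨y, e⟩ ⟨x, A.rx x⟩)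

theorem RxGraph.Univalent.subsingleton_sigma_edge_comp {A : RxGraph} (hA : A.Univalent)
    {ι : Type*} {f : ι → A.V} (hf : Function.Injective f) (x : A.V) :
    Subsingleton (Σ i, A.Edge x (f i)) :=
  haveI : Subsingleton (Σ y, A.Edge x y) := hA x
  (hf.sigma_map (β₂ := A.Edge x) (f₂ := fun _ => id) fun _ => Function.injective_id).subsingleton

theorem CtrvLens.pull_rx_eq {A : RxGraph} (L : CtrvLens A) {x : A.V} (hB : (L.B x).Univalent)
    (u : (L.B x).V) : L.pull (A.rx x) u = u :=
  hB.eq_of_edge (L.pullRx x u)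

/-- If each component of a lax contravariant lens is univalent then its
display is a univalent displayed reflexive graph. -/
theorem ctrvLens_disp_univalent {A : RxGraph} (L : CtrvLens A)
    (h : ∀ x, (L.B x).Univalent) : L.disp.Univalent := by
  intro x u
  exact (h x).subsingleton_sigma_edge_comp
    (Function.LeftInverse.injective (g := id) (L.pull_rx_eq (h x))) u
end

section
/- Let ℬ be an unbiased dependent lens over a reflexive graph 𝒜. If each component ℬ(p) is univalent, then the display d±ℬ is a univalent displayed reflexive graph over 𝒜. -/
/-- An unbiased dependent lens over a reflexive graph `A`: a family of
reflexive graphs indexed in edges, with left/right extension operations and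
the coherences `extRx` and `rextRx`. -/
structure UnbLens (A : RxGraph) where
  B : ∀ {x y : A.V}, A.Edge x y → RxGraph.{u_3, u_4}
  lext : ∀ {x y : A.V} (p : A.Edge x y), (B (A.rx x)).V → (B p).V
  rext : ∀ {x y : A.V} (p : A.Edge x y), (B (A.rx y)).V → (B p).V
  extRx : ∀ (x : A.V) (u : (B (A.rx x)).V),
    (B (A.rx x)).Edge (lext (A.rx x) u) (rext (A.rx x) u)
  rextRx : ∀ (x : A.V) (u : (B (A.rx x)).V),
    (B (A.rx x)).Edge u (rext (A.rx x) u)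

/-- The display of an unbiased dependent lens. -/
def UnbLens.disp {A : RxGraph} (L : UnbLens A) : DispRxGraph A where
  V := fun x => (L.B (A.rx x)).V
  Edge := fun p u v => (L.B p).Edge (L.lext p u) (L.rext p v)
  drx := fun x u => L.extRx x u

/-!
In a univalent reflexive graph every edge `u ≈ v` forces `u = v`, since `⟨v, e⟩` and `⟨u, rx u⟩`
lie in the same fan. Applied to `rextRx x u : u ≈ rext (rx x) u` in the univalent `ℬ(rx x)`, this
makes `rext (rx x)` the identity. Hence a fan of `d±ℬ` at `u`, whose elements are pairs
`⟨v, lext u ≈ rext v⟩`, embeds into the fan of `lext u` in `ℬ(rx x)`, which is a subsingleton.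
-/

namespace RxGraph

variable {G : RxGraph}

theorem Univalent.eq_of_edge_s11 (hG : G.Univalent) {u v : G.V} (e : G.Edge u v) : u = v :=
  congrArg Sigma.fst (@Subsingleton.elim _ (hG u) ⟨u, G.rx u⟩ ⟨v, e⟩)

theorem Univalent.subsingleton_sigma_edge_comp_s11 (hG : G.Univalent) {W : Type*} {f : W → G.V}
    (hf : Function.Injective f) (a : G.V) : Subsingleton (Σ w, G.Edge a (f w)) :=
  have := hG a
  (hf.sigma_map fun _ => Function.injective_id).subsingleton (β := G.Fan a)

end RxGraph

namespace UnbLens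

variable {A : RxGraph} (L : UnbLens A)

theorem rext_rx_eq {x : A.V} (hB : (L.B (A.rx x)).Univalent) (u : (L.B (A.rx x)).V) :
    L.rext (A.rx x) u = u :=
  (hB.eq_of_edge_s11 (L.rextRx x u)).symm

theorem rext_rx_injective {x : A.V} (hB : (L.B (A.rx x)).Univalent) :
    Function.Injective (L.rext (A.rx x)) :=
  fun u v huv => by rwa [L.rext_rx_eq hB, L.rext_rx_eq hB] at huv

end UnbLens

/-- If each component of an unbiased dependent lens is univalent then its
display is a univalent displayed reflexive graph. -/
theorem unbLens_disp_univalent {A : RxGraph} (L : UnbLens A)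
    (h : ∀ {x y : A.V} (p : A.Edge x y), (L.B p).Univalent) :
    L.disp.Univalent := by
  intro x u
  have hB := h (A.rx x)
  exact hB.subsingleton_sigma_edge_comp_s11 (L.rext_rx_injective hB) (L.lext (A.rx x) u)
end

section
/- Let ℬ be an oplax covariant lens of path objects over a path object 𝒜. Assuming function extensionality, the flattening of ℬ onto 𝒜 is a univalent reflexive graph. -/
/-- An oplax covariant lens over a reflexive graph `A`: a family of reflexive
graphs indexed in vertices, equipped with pushforward operations along edges
and an oplax unitor. -/
structure CovLens (A : RxGraph) where
  B : A.V → RxGraph.{u_3, u_4}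
  push : ∀ {x y : A.V}, A.Edge x y → (B x).V → (B y).V
  pushRx : ∀ (x : A.V) (u : (B x).V), (B x).Edge (push (A.rx x) u) u

/-- The display of an oplax covariant lens. -/
def CovLens.disp {A : RxGraph} (L : CovLens A) : DispRxGraph A where
  V := fun x => (L.B x).V
  Edge := fun {_ y} p u v => (L.B y).Edge (L.push p u) v
  drx := fun x u => L.pushRx x u

/-- The flattening of an oplax covariant lens onto its base. -/
def CovLens.flatten {A : RxGraph} (L : CovLens A) : RxGraph where
  V := A.V
  Edge := fun x y =>
    Σ p : A.Edge x y, Σ p' : (L.B x).V → (L.B y).V,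
      ∀ u, (L.B y).Edge (L.push p u) (p' u)
  rx := fun x => ⟨A.rx x, fun u => u, fun u => L.pushRx x u⟩

/-!
A fan of the flattening at `x` is a fan `⟨y, p⟩` of `A` at `x` together with a map
`p' : B x → B y` and edges `push p u ≈ p' u`. Distributing the `Σ` over the `∀`, the latter
data is a family of fans of `B y`, one at each `push p u`. The fan of the flattening is thus a
`Σ`-type over a subsingleton whose fibres are products of subsingletons, hence a subsingleton;
function extensionality enters through the subsingleton instance on `Π`-types.
-/

/-- The type-theoretic axiom of choice. -/
def Equiv.sigmaPiEquivPiSigma {α : Type*} {β : α → Type*} (γ : ∀ a, β a → Type*) :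
    (Σ f : ∀ a, β a, ∀ a, γ a (f a)) ≃ ∀ a, Σ b, γ a b where
  toFun fg a := ⟨fg.1 a, fg.2 a⟩
  invFun h := ⟨fun a => (h a).1, fun a => (h a).2⟩
  left_inv _ := rfl
  right_inv _ := rfl

theorem subsingleton_sigma_pi {α : Type*} {β : α → Type*} {γ : ∀ a, β a → Type*}
    (h : ∀ a, Subsingleton (Σ b, γ a b)) : Subsingleton (Σ f : ∀ a, β a, ∀ a, γ a (f a)) :=
  (Equiv.sigmaPiEquivPiSigma γ).subsingleton

theorem subsingleton_sigma {α : Type*} {β : α → Type*} (hα : Subsingleton α)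
    (hβ : ∀ a, Subsingleton (β a)) : Subsingleton (Σ a, β a) :=
  ⟨fun ⟨a, b⟩ ⟨a', b'⟩ => by
    obtain rfl := Subsingleton.elim a a'
    rw [Subsingleton.elim b b']⟩

/-- Let `L` be an oplax covariant lens of path objects over a path object `A`.
Then the flattening of `L` onto `A` is univalent. (Function extensionality is
available ambiently in Lean.) -/
theorem flatten_univalent {A : RxGraph} (L : CovLens A)
    (hA : A.Univalent) (hB : ∀ x, (L.B x).Univalent) :
    L.flatten.Univalent := by
  intro x
  have hfibre (f : A.Fan x) : Subsingleton
      (Σ p' : (L.B x).V → (L.B f.1).V, ∀ u, (L.B f.1).Edge (L.push f.2 u) (p' u)) :=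
    subsingleton_sigma_pi fun u => hB f.1 (L.push f.2 u)
  exact @Equiv.subsingleton _ _ (Equiv.sigmaAssoc _).symm (subsingleton_sigma (hA x) hfibre)
end

section
/- Let 𝒜 be a path object and let ℬ be a family of path objects indexed by the vertices of 𝒜. Assuming dependent function extensionality, the type of oplax covariant lens structures on ℬ over 𝒜 (pairs consisting of a pushforward operation together with an oplax unitor) is a subsingleton. -/
/-- In a univalent graph, `push x x (rx x) u = u` for any lens structure. -/
private theorem push_rx_eq {A : RxGraph} {B : A.V → RxGraph}
    (hB : ∀ x, (B x).Univalent)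
    (push : ∀ x y : A.V, A.Edge x y → (B x).V → (B y).V)
    (η : ∀ (x : A.V) (u : (B x).V), (B x).Edge (push x x (A.rx x) u) u)
    (x : A.V) (u : (B x).V) : push x x (A.rx x) u = u := by
  have h := (hB x (push x x (A.rx x) u)).allEq
    ⟨push x x (A.rx x) u, (B x).rx _⟩ ⟨u, η x u⟩
  exact congrArg Sigma.fst h

/-- Let `A` be a path object and `B` a family of path objects indexed in the
vertices of `A`. Then the type of oplax covariant lens structures on `B` over
`A` — pairs of a pushforward operation and an oplax unitor — is a
subsingleton. (Dependent function extensionality is available ambiently in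
Lean.) -/
theorem covLensStructure_subsingleton (A : RxGraph) (B : A.V → RxGraph)
    (hA : A.Univalent) (hB : ∀ x, (B x).Univalent) :
    Subsingleton
      (Σ push : ∀ x y : A.V, A.Edge x y → (B x).V → (B y).V,
        ∀ (x : A.V) (u : (B x).V), (B x).Edge (push x x (A.rx x) u) u) := by
  constructor
  rintro ⟨push₁, η₁⟩ ⟨push₂, η₂⟩
  have hpush : push₁ = push₂ := by
    funext x y p u
    -- reduce the edge `p` to `rx x` using univalence of `A`
    have hfan : (⟨y, p⟩ : A.Fan x) = ⟨x, A.rx x⟩ := (hA x).allEq _ _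
    obtain ⟨hy, hp⟩ := Sigma.mk.inj_iff.mp hfan
    subst hy
    rw [eq_of_heq hp]
    rw [push_rx_eq hB push₁ η₁, push_rx_eq hB push₂ η₂]
  subst hpush
  have hη : η₁ = η₂ := by
    funext x u
    have h := (hB x (push₁ x x (A.rx x) u)).allEq ⟨u, η₁ x u⟩ ⟨u, η₂ x u⟩
    have := (Sigma.mk.inj_iff.mp h).2
    exact eq_of_heq this
  rw [hη]
end

section
/- Let 𝒜 be a path object and let ℬ be a family of path objects indexed by the vertices of 𝒜. Assuming dependent function extensionality, the type of lax contravariant lens structures on ℬ over 𝒜 (pairs consisting of a pullback operation together with a lax unitor) is a subsingleton. -/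
/-- Let `A` be a path object and `B` a family of path objects indexed in the
vertices of `A`. Then the type of lax contravariant lens structures on `B`
over `A` — pairs of a pullback operation and a lax unitor — is a
subsingleton. (Dependent function extensionality is available ambiently in
Lean.) -/
theorem ctrvLensStructure_subsingleton (A : RxGraph) (B : A.V → RxGraph)
    (hA : A.Univalent) (hB : ∀ x, (B x).Univalent) :
    Subsingleton
      (Σ pull : ∀ x y : A.V, A.Edge x y → (B y).V → (B x).V,
        ∀ (x : A.V) (u : (B x).V), (B x).Edge u (pull x x (A.rx x) u)) := by
  constructor
  rintro ⟨p₁, h₁⟩ ⟨p₂, h₂⟩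
  have hp : p₁ = p₂ := by
    funext x y e u
    have he : (⟨y, e⟩ : A.Fan x) = ⟨x, A.rx x⟩ := (hA x).elim _ _
    obtain ⟨rfl, he2⟩ := Sigma.mk.inj_iff.mp he
    cases eq_of_heq he2
    exact congrArg Sigma.fst ((hB _ u).elim ⟨_, h₁ _ u⟩ ⟨_, h₂ _ u⟩)
  subst hp
  congr 1
  funext x u
  have hfan : (⟨p₁ x x (A.rx x) u, h₁ x u⟩ : (B x).Fan u)
      = ⟨p₁ x x (A.rx x) u, h₂ x u⟩ := (hB x u).elim _ _
  exact eq_of_heq (Sigma.mk.inj_iff.mp hfan).2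
end

section
/- Any covariant or contravariant fibration of reflexive graphs over a reflexive graph 𝒜 is a univalent displayed reflexive graph, i.e. a displayed path object. -/
/-- A type is contractible when it has an element to which every element is
equal. -/
def Contractible (T : Type*) : Prop :=
  ∃ t : T, ∀ t' : T, t' = t

/-- A covariant fibration: every edge and displayed vertex over its source has
a contractible type of lifts. -/
def DispRxGraph.IsCovFib {A : RxGraph} (B : DispRxGraph A) : Prop :=
  ∀ {x y : A.V} (p : A.Edge x y) (u : B.V x),
    Contractible (Σ v : B.V y, B.Edge p u v)

/-- A contravariant fibration: every edge and displayed vertex over its target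
has a contractible type of lifts. -/
def DispRxGraph.IsCtrvFib {A : RxGraph} (B : DispRxGraph A) : Prop :=
  ∀ {x y : A.V} (p : A.Edge x y) (v : B.V y),
    Contractible (Σ u : B.V x, B.Edge p u v)

/-- Any covariant or contravariant fibration of reflexive graphs is a
univalent displayed reflexive graph, i.e. a displayed path object. -/
theorem fibration_univalent {A : RxGraph} (B : DispRxGraph A) :
    (B.IsCovFib → B.Univalent) ∧ (B.IsCtrvFib → B.Univalent) := by
  constructor
  · intro h x u
    obtain ⟨c, hc⟩ := h (A.rx x) u
    exact ⟨fun a b => (hc a).trans (hc b).symm⟩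
  · intro h x u
    constructor
    suffices key : ∀ z : (B.component x).Fan u, z = ⟨u, B.drx x u⟩ by
      intro a b; rw [key a, key b]
    rintro ⟨v, e⟩
    obtain ⟨c, hc⟩ := h (A.rx x) v
    have h2 : (⟨u, e⟩ : Σ u', B.Edge (A.rx x) u' v) = ⟨v, B.drx x v⟩ :=
      (hc ⟨u, e⟩).trans (hc ⟨v, B.drx x v⟩).symm
    have hv : u = v := congrArg Sigma.fst h2
    subst hv
    have he : e = B.drx x u := by
      injection h2
    rw [he]
end

section
/- Let ℬ be a covariant fibration of reflexive graphs over a reflexive graph 𝒜. For every edge p : x ≈ y, u : ℬ(x) and v : ℬ(y), there is an equivalence between the type of displayed edges u ≈[p] v and the type of vertical edges p_* u ≈_{ℬ(y)} v, given by the straightening function Str (defined from the contraction of Σ w : ℬ(y), u ≈[p] w by identification induction so that the canonical lift p_† u is sent to the reflexivity edge of ℬ(y) at p_* u), with inverse the unstraightening function (defined from the contraction of Σ w : ℬ(y), p_* u ≈_{ℬ(y)} w by identification induction so that the reflexivity edge at p_* u is sent to p_† u). -/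
/-- A covariant fibration of reflexive graphs, presented with its centres of
contraction: for every edge `p : x ≈ y` and `u : V x`, the type
`Σ v : V y, u ≈[p] v` is contractible with centre `(p_* u, p_† u)`. -/
structure CovFib (A : RxGraph) extends DispRxGraph A where
  pushV : ∀ {x y : A.V}, A.Edge x y → V x → V y
  pushE : ∀ {x y : A.V} (p : A.Edge x y) (u : V x), Edge p u (pushV p u)
  contr : ∀ {x y : A.V} (p : A.Edge x y) (u : V x)
    (w : Σ v : V y, Edge p u v), w = ⟨pushV p u, pushE p u⟩

/-- The straightening function, defined from the contraction of
`Σ w : V y, u ≈[p] w` by identification induction, sending the canonical lift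
`p_† u` to the reflexivity edge of the component at `y` on `p_* u`. -/
def CovFib.str {A : RxGraph} (F : CovFib A) {x y : A.V} (p : A.Edge x y)
    (u : F.V x) (v : F.V y) (q : F.Edge p u v) :
    F.Edge (A.rx y) (F.pushV p u) v :=
  Eq.rec
    (motive := fun (w : Σ v' : F.V y, F.Edge p u v') _ =>
      F.Edge (A.rx y) (F.pushV p u) w.1)
    (F.drx y (F.pushV p u)) ((F.contr p u ⟨v, q⟩).symm)

/-- The unstraightening function, defined from the contraction of
`Σ w : V y, p_* u ≈[rx y] w` by identification induction, sending the
reflexivity edge on `p_* u` to the canonical lift `p_† u`. -/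
def CovFib.unstr {A : RxGraph} (F : CovFib A) {x y : A.V} (p : A.Edge x y)
    (u : F.V x) (v : F.V y) (q : F.Edge (A.rx y) (F.pushV p u) v) :
    F.Edge p u v :=
  Eq.rec
    (motive := fun (w : Σ w' : F.V y, F.Edge (A.rx y) (F.pushV p u) w') _ =>
      F.Edge p u w.1)
    (F.pushE p u)
    ((F.contr (A.rx y) (F.pushV p u)
        ⟨F.pushV p u, F.drx y (F.pushV p u)⟩).trans
      ((F.contr (A.rx y) (F.pushV p u) ⟨v, q⟩).symm))

/-- For a covariant fibration, straightening gives an equivalence between the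
displayed edges `u ≈[p] v` and the vertical edges `p_* u ≈_{B(y)} v`, with
inverse the unstraightening function. -/
theorem str_is_equiv {A : RxGraph} (F : CovFib A) {x y : A.V}
    (p : A.Edge x y) (u : F.V x) (v : F.V y) :
    Function.LeftInverse (F.unstr p u v) (F.str p u v) ∧
      Function.RightInverse (F.unstr p u v) (F.str p u v) := by
  constructor
  · intro q
    suffices h2 : ∀ w : Σ v', F.Edge p u v',
        F.unstr p u w.1 (F.str p u w.1 w.2) = w.2 from h2 ⟨v, q⟩
    intro w
    rw [F.contr p u w]; rfl
  · intro q
    suffices h2 : ∀ w : Σ w', F.Edge (A.rx y) (F.pushV p u) w',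
        F.str p u w.1 (F.unstr p u w.1 w.2) = w.2 from h2 ⟨v, q⟩
    intro w
    rw [(F.contr (A.rx y) (F.pushV p u) w).trans
      (F.contr (A.rx y) (F.pushV p u) ⟨F.pushV p u, F.drx y (F.pushV p u)⟩).symm]
    rfl
end
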